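/- Fix integers a ≥ 2 and b ≥ 0 with a + b ≥ 2. If a permutation π of size n avoids the permutation σ_{a,b}, then S preserves the descent set of π: {i ∈ {1,…,n−1} : π_i > π_{i+1}} = {i ∈ {1,…,n−1} : S(π)_i > S(π)_{i+1}}. -/

import Mathlib

/-- `f` picks out an occurrence of the pattern `ρ` in the permutation `π`. -/
def PermOcc {n m : ℕ} (π : Equiv.Perm (Fin n)) (ρ : Equiv.Perm (Fin m))
    (f : Fin m → Fin n) : Prop :=
  StrictMono f ∧ ∀ j l : Fin m, π (f j) < π (f l) ↔ ρ j < ρ l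

/-- `π` contains the pattern `ρ`. -/
def PermContains {n m : ℕ} (π : Equiv.Perm (Fin n)) (ρ : Equiv.Perm (Fin m)) : Prop :=
  ∃ f : Fin m → Fin n, PermOcc π ρ f

/-- The partial shuffle of size `m` with moved (1-indexed) value `a`:
the permutations of size `m`, other than the identity, in which the values
other than `a` appear in increasing order.  `Π(a,b)` is `partialShuffle (a+b) a`. -/
def partialShuffle (m a : ℕ) : Set (Equiv.Perm (Fin m)) :=
  {σ | σ ≠ 1 ∧ ∀ i j : Fin m, i < j → (σ i : ℕ) + 1 ≠ a → (σ j : ℕ) + 1 ≠ a → σ i < σ j}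

/-- The decreasing permutation `δ_k`. -/
def descPerm (k : ℕ) : Equiv.Perm (Fin k) := Fin.revPerm

/-- `σ_{a,b}` (with `m = a + b`): the identity permutation with the
values `a-1` and `a` transposed. -/
def sigmaPerm (m a : ℕ) (h2 : 2 ≤ a) (hm : a ≤ m) : Equiv.Perm (Fin m) :=
  Equiv.swap ⟨a - 2, by omega⟩ ⟨a - 1, by omega⟩

/-- The (1-indexed) value `v` of `π` acts as the `c`-element (i.e. corresponds to the
entry with 1-indexed value `c`) of an occurrence in `π` of some pattern from `P`. -/
def ActsAs {n m : ℕ} (π : Equiv.Perm (Fin n)) (P : Set (Equiv.Perm (Fin m)))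
    (c v : ℕ) : Prop :=
  ∃ ρ ∈ P, ∃ f : Fin m → Fin n, PermOcc π ρ f ∧
    ∃ j : Fin m, (ρ j : ℕ) + 1 = c ∧ (π (f j) : ℕ) + 1 = v

/-- `underline-a`: the smallest (1-indexed) value of `π` acting as the `a`-element of an
occurrence of a pattern from `Π(a-1, b+1)`. -/
noncomputable def underA (n a b : ℕ) (π : Equiv.Perm (Fin n)) : ℕ :=
  sInf {v | ActsAs π (partialShuffle (a + b) (a - 1)) a v}

/-- `q` is an associated `(a-1)`-value of `underline-a` in `π`. -/
def IsAssoc (n a b : ℕ) (π : Equiv.Perm (Fin n)) (q : ℕ) : Prop :=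
  ∃ ρ ∈ partialShuffle (a + b) (a - 1), ∃ f : Fin (a + b) → Fin n, PermOcc π ρ f ∧
    (∃ j : Fin (a + b), (ρ j : ℕ) + 1 = a ∧ (π (f j) : ℕ) + 1 = underA n a b π) ∧
    (∃ l : Fin (a + b), (ρ l : ℕ) + 1 = a - 1 ∧ (π (f l) : ℕ) + 1 = q)

/-- `underline-(a-1)`: the smallest associated `(a-1)`-value. -/
noncomputable def underA1 (n a b : ℕ) (π : Equiv.Perm (Fin n)) : ℕ :=
  sInf {q | IsAssoc n a b π q}

/-- The permutation of `Fin n` rotating the (0-indexed) interval `[x, y]`: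
`y ↦ x` and `v ↦ v + 1` for `x ≤ v < y`; all other elements are fixed. -/
def rotPerm (n x y : ℕ) : Equiv.Perm (Fin n) :=
  if h : x ≤ y ∧ y < n then
    { toFun := fun v =>
        if (v : ℕ) = y then ⟨x, by omega⟩
        else if hv : x ≤ (v : ℕ) ∧ (v : ℕ) < y then ⟨(v : ℕ) + 1, by omega⟩
        else v
      invFun := fun v =>
        if (v : ℕ) = x then ⟨y, by omega⟩
        else if hv : x < (v : ℕ) ∧ (v : ℕ) ≤ y then ⟨(v : ℕ) - 1, by omega⟩
        else v
      left_inv := by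
        intro v
        dsimp only
        split_ifs <;> apply Fin.ext <;> simp_all <;> omega
      right_inv := by
        intro v
        dsimp only
        split_ifs <;> apply Fin.ext <;> simp_all <;> omega }
  else 1

/-- The map `S` (depending on the parameters `a`, `b`): if `π` contains a pattern from
`Π(a-1, b+1)`, the values in the 1-indexed interval `[underline-(a-1), underline-a - 1]`
are increased by `1` and the value `underline-a` is replaced by `underline-(a-1)`;
otherwise `π` is fixed. -/
noncomputable def Smap (n a b : ℕ) (π : Equiv.Perm (Fin n)) : Equiv.Perm (Fin n) :=
  open Classical in
  if ∃ ρ ∈ partialShuffle (a + b) (a - 1), PermContains π ρ then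
    rotPerm n (underA1 n a b π - 1) (underA n a b π - 1) * π
  else π

/-!
`S` rotates the values in the interval `[underline-(a-1), underline-a]`, so it can change the
relative order of two adjacent entries of `π` only if one of them is `underline-a` and the other
lies in `[underline-(a-1), underline-a)`. Fix an occurrence of a pattern of `Π(a-1, b+1)` whose
`a`-element is `underline-a` and whose `(a-1)`-element is `underline-(a-1)`. A right neighbour of
`underline-a` in that range turns the occurrence into an occurrence of `σ_{a,b}`. A left neighbour
equal to `underline-(a-1)` forces the pattern to be the identity, and a left neighbour strictly
inside the range could replace `underline-a` as the `a`-element, contradicting the minimality of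
`underline-a`.
-/

open Function

theorem rotPerm_apply {n x y : ℕ} (hxy : x ≤ y) (hy : y < n) (v : Fin n) :
    (rotPerm n x y v : ℕ) =
      if (v : ℕ) = y then x else if x ≤ v ∧ (v : ℕ) < y then v + 1 else v := by
  rw [rotPerm, dif_pos ⟨hxy, hy⟩]
  simp only [Equiv.coe_fn_mk]
  split_ifs <;> rfl

theorem rotPerm_lt_rotPerm_iff {n x y : ℕ} (hxy : x ≤ y) (hy : y < n) {s t : Fin n}
    (hs : (s : ℕ) = y → (t : ℕ) ∉ Set.Ico x y) (ht : (t : ℕ) = y → (s : ℕ) ∉ Set.Ico x y) :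
    rotPerm n x y s < rotPerm n x y t ↔ s < t := by
  simp only [Set.mem_Ico] at hs ht
  rw [Fin.lt_def, Fin.lt_def, rotPerm_apply hxy hy, rotPerm_apply hxy hy]
  split_ifs <;> omega

theorem update_apply_lt_update_apply_iff {ι α : Type*} [DecidableEq ι] [LinearOrder α]
    {g : ι → α} {j : ι} {c : α} (hc : ∀ i ≠ j, (g i < c ∧ g i < g j) ∨ (c < g i ∧ g j < g i))
    (i i' : ι) : update g j c i < update g j c i' ↔ g i < g i' := by
  have hj : ∀ i ≠ j, (update g j c i < update g j c j ↔ g i < g j) ∧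
      (update g j c j < update g j c i ↔ g j < g i) := by
    intro i hi
    rw [update_self, update_of_ne hi]
    rcases hc i hi with ⟨h1, h2⟩ | ⟨h1, h2⟩
    · exact ⟨iff_of_true h1 h2, iff_of_false h1.asymm h2.asymm⟩
    · exact ⟨iff_of_false h1.asymm h2.asymm, iff_of_true h1 h2⟩
  by_cases hi : i = j <;> by_cases hi' : i' = j
  · simp [hi, hi']
  · exact hi ▸ (hj i' hi').2
  · exact hi' ▸ (hj i hi).1
  · rw [update_of_ne hi, update_of_ne hi']

section PatternOccurrence

variable {n m : ℕ} {π : Equiv.Perm (Fin n)} {ρ : Equiv.Perm (Fin m)} {f : Fin m → Fin n}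

theorem permOcc_comp_iff {τ : Equiv.Perm (Fin m)} {g : Fin m → Fin n} :
    PermOcc π τ (g ∘ τ) ↔ StrictMono (g ∘ τ) ∧ StrictMono (π ∘ g) := by
  refine and_congr_right fun _ => ⟨fun hval r s hrs => ?_, fun hmono _ _ => hmono.lt_iff_lt⟩
  simpa using (hval (τ.symm r) (τ.symm s)).2 (by simpa using hrs)

theorem PermOcc.strictMono_comp_symm (hf : PermOcc π ρ f) : StrictMono (π ∘ f ∘ ρ.symm) := by
  rw [show f = (f ∘ ρ.symm) ∘ ρ by ext; simp] at hf
  exact (permOcc_comp_iff.1 hf).2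

theorem PermOcc.update {j : Fin m} {p : Fin n} (hf : PermOcc π ρ f)
    (hpos : ∀ i ≠ j, (f i < p ∧ f i < f j) ∨ (p < f i ∧ f j < f i))
    (hval : ∀ i ≠ j, (π (f i) < π p ∧ π (f i) < π (f j)) ∨ (π p < π (f i) ∧ π (f j) < π (f i))) :
    PermOcc π ρ (update f j p) := by
  refine ⟨fun i i' h => (update_apply_lt_update_apply_iff hpos i i').2 (hf.1 h), fun i i' => ?_⟩
  rw [← comp_apply (f := π), ← comp_apply (f := π) (x := i'), comp_update]
  exact (update_apply_lt_update_apply_iff (g := π ∘ f) hval i i').trans (hf.2 i i')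

theorem PermOcc.update_of_adjacent {j l : Fin m} {p : Fin n} (hf : PermOcc π ρ f)
    (hlj : (ρ l : ℕ) + 1 = ρ j) (hp : (p : ℕ) + 1 = f j) (hlo : π (f l) < π p)
    (hhi : π p < π (f j)) : PermOcc π ρ (Function.update f j p) := by
  have hval : ∀ i ≠ j,
      (π (f i) < π p ∧ π (f i) < π (f j)) ∨ (π p < π (f i) ∧ π (f j) < π (f i)) := by
    intro i hi
    rcases lt_or_gt_of_ne (ρ.injective.ne hi) with h | h
    · have : π (f i) ≤ π (f l) := by
        rcases eq_or_ne i l with rfl | hil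
        · exact le_rfl
        · refine ((hf.2 i l).2 ?_).le
          have := Fin.val_injective.ne (ρ.injective.ne hil)
          rw [Fin.lt_def] at h ⊢
          omega
      exact .inl ⟨this.trans_lt hlo, this.trans_lt (hlo.trans hhi)⟩
    · have := (hf.2 j i).2 h
      exact .inr ⟨hhi.trans this, this⟩
  refine hf.update (fun i hi => ?_) hval
  have hne : f i ≠ p := fun h => by rcases hval i hi with ⟨h1, -⟩ | ⟨h1, -⟩ <;> simp [h] at h1
  have := Fin.val_injective.ne hne
  have := Fin.val_injective.ne (hf.1.injective.ne hi)
  simp only [Fin.lt_def]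
  omega

theorem symm_lt_symm_of_mem_partialShuffle {c : ℕ} (hρ : ρ ∈ partialShuffle m c) {r s : Fin m}
    (hr : (r : ℕ) + 1 ≠ c) (hs : (s : ℕ) + 1 ≠ c) (hrs : r < s) : ρ.symm r < ρ.symm s := by
  rcases lt_trichotomy (ρ.symm r) (ρ.symm s) with h | h | h
  · exact h
  · exact absurd (ρ.symm.injective h) hrs.ne
  · have := hρ.2 _ _ h (by simpa) (by simpa)
    simp only [Equiv.apply_symm_apply] at this
    exact absurd hrs this.asymm

theorem StrictMono.val_add_one_eq (hf : StrictMono f) {i j : Fin m}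
    (h : (f i : ℕ) + 1 = f j) : (i : ℕ) + 1 = j := by
  have hij : i < j := hf.lt_iff_lt.1 (Fin.lt_def.2 (by omega))
  by_contra hne
  have hk : (i : ℕ) + 1 < m := by omega
  have h1 := hf (show i < ⟨i + 1, hk⟩ from Fin.lt_def.2 (by simp))
  have h2 := hf (show (⟨i + 1, hk⟩ : Fin m) < j from Fin.lt_def.2 (by simp; omega))
  rw [Fin.lt_def] at h1 h2
  omega

theorem eq_one_of_mem_partialShuffle_of_adjacent {c : ℕ} (hρ : ρ ∈ partialShuffle m c) {j l : Fin m}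
    (hl : (ρ l : ℕ) + 1 = c) (hj : (ρ j : ℕ) = c) (hlj : (l : ℕ) + 1 = j) : ρ = 1 := by
  have hρl : ∀ i, (ρ i : ℕ) + 1 = c → i = l := fun i hi => ρ.injective (Fin.ext (by omega))
  have hmono : StrictMono ρ := by
    intro r s hrs
    have hjc : (ρ j : ℕ) + 1 ≠ c := by omega
    by_cases hr : (ρ r : ℕ) + 1 = c
    · obtain rfl := hρl r hr
      rcases eq_or_ne s j with rfl | hsj
      · exact Fin.lt_def.2 (by omega)
      · have hjs : j < s := Fin.lt_def.2 (by
          have := Fin.val_injective.ne hsj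
          rw [Fin.lt_def] at hrs
          omega)
        have hs : (ρ s : ℕ) + 1 ≠ c := fun hs => hrs.ne' (hρl s hs)
        exact lt_trans (Fin.lt_def.2 (by omega)) (hρ.2 j s hjs hjc hs)
    by_cases hs : (ρ s : ℕ) + 1 = c
    · obtain rfl := hρl s hs
      have hrj := Fin.lt_def.1 (hρ.2 r j (Fin.lt_def.2 (by rw [Fin.lt_def] at hrs; omega)) hr hjc)
      exact Fin.lt_def.2 (by omega)
    · exact hρ.2 r s hrs hr hs
  exact Equiv.ext fun x => hmono.apply_eq

theorem strictMono_update_comp_swap {e : Fin m → Fin n} {u v : Fin m} (huv : (v : ℕ) = u + 1)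
    {p : Fin n} (hp : (p : ℕ) = e v + 1) (he : ∀ r s, r ≠ u → s ≠ u → r < s → e r < e s)
    (hne : ∀ s, v < s → e s ≠ p) : StrictMono (update e u p ∘ Equiv.swap u v) := by
  have hvu : v ≠ u := Fin.ne_of_val_ne (by omega)
  have hk : ∀ t : Fin m, ((update e u p ∘ Equiv.swap u v) t : ℕ) =
      if (t : ℕ) = u then e v else if (t : ℕ) = v then p else e t := by
    intro t
    split_ifs with hu hv
    · simp [Fin.ext hu, update_of_ne hvu]
    · simp [Fin.ext hv]
    · have htu : t ≠ u := Fin.ne_of_val_ne hu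
      rw [comp_apply, Equiv.swap_apply_of_ne_of_ne htu (Fin.ne_of_val_ne hv), update_of_ne htu]
  have hlt : ∀ r s : Fin m, (r : ℕ) ≠ u → (s : ℕ) ≠ u → (r : ℕ) < s → (e r : ℕ) < e s :=
    fun r s hr hs hrs => he r s (Fin.ne_of_val_ne hr) (Fin.ne_of_val_ne hs) hrs
  have hne' : ∀ s : Fin m, (v : ℕ) < s → (e s : ℕ) ≠ p :=
    fun s hs => Fin.val_ne_of_ne (hne s hs)
  intro r s hrs
  have := hlt r v; have := hlt v s; have := hlt r s; have := hne' r; have := hne' s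
  rw [Fin.lt_def] at hrs ⊢
  rw [hk, hk]
  split_ifs <;> omega

theorem PermOcc.permContains_swap {c : ℕ} (hρ : ρ ∈ partialShuffle m c) (hf : PermOcc π ρ f)
    {j l : Fin m} (hl : (ρ l : ℕ) + 1 = c) (hj : (ρ j : ℕ) = c) {p : Fin n}
    (hp : (p : ℕ) = f j + 1) (hlo : π (f l) ≤ π p) (hhi : π p < π (f j)) :
    PermContains π (Equiv.swap (ρ l) (ρ j)) := by
  set e := f ∘ ρ.symm
  have hel : e (ρ l) = f l := by simp [e]
  have hej : e (ρ j) = f j := by simp [e]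
  have hval : StrictMono (π ∘ e) := hf.strictMono_comp_symm
  have hside : ∀ r ≠ ρ l, ((π ∘ e) r < π p ∧ (π ∘ e) r < (π ∘ e) (ρ l)) ∨
      (π p < (π ∘ e) r ∧ (π ∘ e) (ρ l) < (π ∘ e) r) := by
    intro r hr
    rcases lt_or_gt_of_ne hr with h | h
    · have := hval h
      simp only [comp_apply, hel] at this ⊢
      exact .inl ⟨this.trans_le hlo, this⟩
    · have hjr : ρ j ≤ r := Fin.le_def.2 (by rw [Fin.lt_def] at h; omega)
      have := hval.monotone hjr
      simp only [comp_apply, hel, hej] at this ⊢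
      exact .inr ⟨hhi.trans_le this, (hf.2 l j).2 (Fin.lt_def.2 (by omega)) |>.trans_le this⟩
  -- `e` indexes the occurrence by pattern values; moving its `ρ l`-entry to `p` and reading it
  -- in swapped order gives the occurrence of the swap.
  refine ⟨Function.update e (ρ l) p ∘ Equiv.swap (ρ l) (ρ j), permOcc_comp_iff.2 ⟨?_, ?_⟩⟩
  · refine strictMono_update_comp_swap (by omega) (by rw [hej, hp])
      (fun r s hr hs hrs => hf.1 (symm_lt_symm_of_mem_partialShuffle hρ ?_ ?_ hrs)) ?_
    · exact fun h => hr (Fin.ext (by omega))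
    · exact fun h => hs (Fin.ext (by omega))
    · intro s hjs h
      have := hval hjs
      simp only [comp_apply, hej, h] at this
      exact this.asymm hhi
  · rw [comp_update]
    intro r s hrs
    rw [update_apply_lt_update_apply_iff hside]
    exact hval hrs

end PatternOccurrence

section Underline

variable {a b n : ℕ} {π : Equiv.Perm (Fin n)} {ρ : Equiv.Perm (Fin (a + b))}
  {f : Fin (a + b) → Fin n} {j l : Fin (a + b)} {p : Fin n}

theorem isAssoc_underA1 (ha : 2 ≤ a) (hC : ∃ ρ ∈ partialShuffle (a + b) (a - 1), PermContains π ρ) :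
    IsAssoc n a b π (underA1 n a b π) := by
  obtain ⟨ρ, hρ, f, hf⟩ := hC
  have hA : {v | ActsAs π (partialShuffle (a + b) (a - 1)) a v}.Nonempty :=
    ⟨_, ρ, hρ, f, hf, ρ.symm ⟨a - 1, by omega⟩, by simp; omega, rfl⟩
  obtain ⟨ρ', hρ', f', hf', j, hj, hjA⟩ := Nat.sInf_mem hA
  have hAssoc : {q | IsAssoc n a b π q}.Nonempty :=
    ⟨_, ρ', hρ', f', hf', ⟨j, hj, hjA⟩, ρ'.symm ⟨a - 2, by omega⟩, by simp; omega, rfl⟩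
  exact Nat.sInf_mem hAssoc

theorem PermOcc.right_neighbour_not_mem_Ico (ha : 2 ≤ a)
    (hσ : ¬ PermContains π (sigmaPerm (a + b) a ha (Nat.le_add_right a b)))
    (hρ : ρ ∈ partialShuffle (a + b) (a - 1)) (hf : PermOcc π ρ f) (hj : (ρ j : ℕ) + 1 = a)
    (hl : (ρ l : ℕ) + 1 = a - 1) (hp : (p : ℕ) = f j + 1) :
    π p ∉ Set.Ico (π (f l)) (π (f j)) := by
  rintro ⟨hlo, hhi⟩
  have hj' : (ρ j : ℕ) = a - 1 := by omega
  have hswap : sigmaPerm (a + b) a ha (Nat.le_add_right a b) = Equiv.swap (ρ l) (ρ j) := by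
    rw [sigmaPerm, show ρ l = ⟨a - 2, _⟩ from Fin.ext (by simp; omega),
      show ρ j = ⟨a - 1, _⟩ from Fin.ext hj']
  exact hσ (hswap ▸ hf.permContains_swap hρ hl hj' hp hlo hhi)

theorem PermOcc.left_neighbour_not_mem_Ico (hρ : ρ ∈ partialShuffle (a + b) (a - 1))
    (hf : PermOcc π ρ f) (hj : (ρ j : ℕ) + 1 = a) (hl : (ρ l : ℕ) + 1 = a - 1)
    (hjA : (π (f j) : ℕ) + 1 = underA n a b π) (hp : (p : ℕ) + 1 = f j) :
    π p ∉ Set.Ico (π (f l)) (π (f j)) := by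
  rintro ⟨hlo, hhi⟩
  rcases hlo.eq_or_lt with heq | hlt
  · obtain rfl := π.injective heq
    exact hρ.1 (eq_one_of_mem_partialShuffle_of_adjacent hρ hl (by omega)
      (hf.1.val_add_one_eq hp))
  · have : underA n a b π ≤ π p + 1 := Nat.sInf_le
      ⟨ρ, hρ, _, hf.update_of_adjacent (by omega) hp hlt hhi, j, hj, by simp⟩
    rw [Fin.lt_def] at hhi
    omega

end Underline

theorem Smap_preserves_descent_set (a b n : ℕ) (ha : 2 ≤ a) (π : Equiv.Perm (Fin n))
    (h : ¬ PermContains π (sigmaPerm (a + b) a ha (Nat.le_add_right a b))) :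
    {i : ℕ | ∃ (h1 : i < n) (h2 : i + 1 < n), π ⟨i + 1, h2⟩ < π ⟨i, h1⟩} =
      {i : ℕ | ∃ (h1 : i < n) (h2 : i + 1 < n),
        Smap n a b π ⟨i + 1, h2⟩ < Smap n a b π ⟨i, h1⟩} := by
  by_cases hC : ∃ ρ ∈ partialShuffle (a + b) (a - 1), PermContains π ρ
  swap
  · rw [Smap, if_neg hC]
  obtain ⟨ρ, hρ, f, hf, ⟨j, hj, hjA⟩, l, hl, hlA⟩ := isAssoc_underA1 ha hC
  have hlj : π (f l) < π (f j) := (hf.2 l j).2 (Fin.lt_def.2 (by omega))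
  have hSmap : Smap n a b π = rotPerm n (π (f l)) (π (f j)) * π := by
    rw [Smap, if_pos hC, ← hjA, ← hlA, Nat.add_sub_cancel, Nat.add_sub_cancel]
  ext i
  simp only [hSmap, Equiv.Perm.mul_apply]
  refine exists_congr fun h1 => exists_congr fun h2 =>
    (rotPerm_lt_rotPerm_iff hlj.le (π (f j)).isLt (fun hi => ?_) (fun hi => ?_)).symm
  · have hfj : f j = ⟨i + 1, h2⟩ := π.injective (Fin.ext hi.symm)
    exact hf.left_neighbour_not_mem_Ico hρ hj hl hjA (by rw [hfj])
  · have hfj : f j = ⟨i, h1⟩ := π.injective (Fin.ext hi.symm)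
    exact hf.right_neighbour_not_mem_Ico ha h hρ hj hl (by rw [hfj])
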